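/- Let ρ be a 4×4 density matrix whose support is contained in span{|00⟩, |11⟩, (|01⟩+|10⟩)/√2}, and let H be a Hermitian operator with supp(H) ⊆ supp(ρ). Then Tr(Z₁H) = Tr(Z₂H), Tr(X₁Y₂H) = Tr(Y₁X₂H), and Tr(H) = Tr(X₁X₂H) + Tr(Y₁Y₂H) + Tr(Z₁Z₂H), where X_j, Y_j, Z_j are Pauli matrices acting on qubit j of the two-qubit space C²⊗C². -/

import Mathlib

open ComplexOrder Matrix Kronecker

noncomputable def pauliX : Matrix (Fin 2) (Fin 2) ℂ := !![0, 1; 1, 0]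
noncomputable def pauliY : Matrix (Fin 2) (Fin 2) ℂ := !![0, -Complex.I; Complex.I, 0]
noncomputable def pauliZ : Matrix (Fin 2) (Fin 2) ℂ := !![1, 0; 0, -1]

/-- `|00⟩`. -/
noncomputable def e00 : Fin 2 × Fin 2 → ℂ := fun p => if p = (0, 0) then 1 else 0
/-- `|11⟩`. -/
noncomputable def e11 : Fin 2 × Fin 2 → ℂ := fun p => if p = (1, 1) then 1 else 0
/-- `(|01⟩ + |10⟩)/√2`. -/
noncomputable def ePlus : Fin 2 × Fin 2 → ℂ :=
  fun p => if p = (0, 1) ∨ p = (1, 0) then ((Real.sqrt 2 : ℂ))⁻¹ else 0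

/-! The support hypothesis forces `ρ`, and hence `H`, to annihilate the singlet
`s = |01⟩ - |10⟩`; as `H` is Hermitian, also `s† H = 0`. Each of `Z₁ - Z₂`, `X₁Y₂ - Y₁X₂` and
`1 - (X₁X₂ + Y₁Y₂ + Z₁Z₂) = 2 |s⟩⟨s|` has the form `|s⟩⟨a| + |b⟩⟨s|`, so its trace against `H`
vanishes. -/

theorem Matrix.PosSemidef.mulVec_eq_zero_of_orthogonal_range {𝕜 n : Type*} [RCLike 𝕜]
    [Fintype n] [DecidableEq n] {A : Matrix n n 𝕜} (hA : A.PosSemidef) {v : n → 𝕜}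
    (hv : ∀ w ∈ LinearMap.range (toLin' A), star v ⬝ᵥ w = 0) : A *ᵥ v = 0 :=
  (hA.dotProduct_mulVec_zero_iff v).mp (hv _ ⟨v, toLin'_apply A v⟩)

section Hermitian

variable {α n : Type*} [CommRing α] [StarRing α] [Fintype n] {H : Matrix n n α}

theorem Matrix.IsHermitian.star_vecMul_eq_zero (hH : H.IsHermitian) {v : n → α}
    (hv : H *ᵥ v = 0) : star v ᵥ* H = 0 :=
  calc star v ᵥ* H = star v ᵥ* Hᴴ := by rw [hH.eq]
    _ = star (H *ᵥ v) := (star_mulVec H v).symm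
    _ = 0 := by rw [hv, star_zero]

theorem Matrix.IsHermitian.trace_vecMulVec_add_vecMulVec_mul_eq_zero (hH : H.IsHermitian)
    {v : n → α} (hv : H *ᵥ v = 0) (a b : n → α) :
    trace ((vecMulVec v a + vecMulVec b (star v)) * H) = 0 := by
  rw [add_mul, trace_add, trace_mul_comm, mul_vecMulVec, vecMulVec_mul, hv,
    hH.star_vecMul_eq_zero hv, zero_vecMulVec, vecMulVec_zero, trace_zero, add_zero]

end Hermitian

def singlet : Fin 2 × Fin 2 → ℂ := Pi.single (0, 1) 1 - Pi.single (1, 0) 1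

def tripletZero : Fin 2 × Fin 2 → ℂ := Pi.single (0, 1) 1 + Pi.single (1, 0) 1

theorem star_singlet_dotProduct_eq_zero {w : Fin 2 × Fin 2 → ℂ}
    (hw : w ∈ Submodule.span ℂ {e00, e11, ePlus}) : star singlet ⬝ᵥ w = 0 := by
  induction hw using Submodule.span_induction with
  | mem x hx =>
    rcases hx with rfl | rfl | rfl <;>
      simp [singlet, e00, e11, ePlus, sub_dotProduct, Pi.star_single]
  | zero => exact dotProduct_zero _
  | add x y _ _ hx hy => rw [dotProduct_add, hx, hy, add_zero]
  | smul c x _ hx => rw [dotProduct_smul, hx, smul_zero]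

theorem pauliZ_kron_one_sub_one_kron_pauliZ :
    pauliZ ⊗ₖ (1 : Matrix (Fin 2) (Fin 2) ℂ) - 1 ⊗ₖ pauliZ =
      vecMulVec singlet tripletZero + vecMulVec tripletZero (star singlet) := by
  ext ⟨a, b⟩ ⟨c, d⟩
  fin_cases a <;> fin_cases b <;> fin_cases c <;> fin_cases d <;>
    norm_num [pauliZ, singlet, tripletZero, vecMulVec_apply, Pi.star_single, one_apply]

theorem pauliX_kron_pauliY_sub_pauliY_kron_pauliX :
    pauliX ⊗ₖ pauliY - pauliY ⊗ₖ pauliX =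
      vecMulVec singlet (Complex.I • tripletZero) +
        vecMulVec (-Complex.I • tripletZero) (star singlet) := by
  ext ⟨a, b⟩ ⟨c, d⟩
  fin_cases a <;> fin_cases b <;> fin_cases c <;> fin_cases d <;>
    norm_num [pauliX, pauliY, singlet, tripletZero, vecMulVec_apply, Pi.star_single,
      sub_eq_add_neg]

theorem one_sub_sum_pauli_kron_self :
    1 - (pauliX ⊗ₖ pauliX + pauliY ⊗ₖ pauliY + pauliZ ⊗ₖ pauliZ) =
      vecMulVec singlet (star singlet) + vecMulVec singlet (star singlet) := by
  ext ⟨a, b⟩ ⟨c, d⟩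
  fin_cases a <;> fin_cases b <;> fin_cases c <;> fin_cases d <;>
    norm_num [pauliX, pauliY, pauliZ, singlet, vecMulVec_apply, Pi.star_single, one_apply]

theorem symmetric_support_trace_constraints_general
    (ρ H : Matrix (Fin 2 × Fin 2) (Fin 2 × Fin 2) ℂ)
    (hρ : ρ.PosSemidef)
    (hsupp : LinearMap.range (Matrix.toLin' ρ) ≤
      Submodule.span ℂ {e00, e11, ePlus})
    (hH : H.IsHermitian)
    (hker : LinearMap.ker (Matrix.toLin' ρ) ≤ LinearMap.ker (Matrix.toLin' H)) :
    ((pauliZ ⊗ₖ (1 : Matrix (Fin 2) (Fin 2) ℂ)) * H).trace =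
      (((1 : Matrix (Fin 2) (Fin 2) ℂ) ⊗ₖ pauliZ) * H).trace ∧
    ((pauliX ⊗ₖ pauliY) * H).trace = ((pauliY ⊗ₖ pauliX) * H).trace ∧
    H.trace = ((pauliX ⊗ₖ pauliX) * H).trace + ((pauliY ⊗ₖ pauliY) * H).trace +
      ((pauliZ ⊗ₖ pauliZ) * H).trace := by
  have hρs : ρ *ᵥ singlet = 0 := hρ.mulVec_eq_zero_of_orthogonal_range
    fun w hw => star_singlet_dotProduct_eq_zero (hsupp hw)
  have hHs : H *ᵥ singlet = 0 := hker (x := singlet) hρs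
  have hD := hH.trace_vecMulVec_add_vecMulVec_mul_eq_zero hHs
  refine ⟨?_, ?_, ?_⟩
  · rw [← sub_eq_zero, ← trace_sub, ← sub_mul, pauliZ_kron_one_sub_one_kron_pauliZ, hD]
  · rw [← sub_eq_zero, ← trace_sub, ← sub_mul, pauliX_kron_pauliY_sub_pauliY_kron_pauliX, hD]
  · have h := hD (star singlet) singlet
    rw [← one_sub_sum_pauli_kron_self, sub_mul, one_mul, trace_sub, add_mul, add_mul, trace_add,
      trace_add] at h
    linear_combination h

/-- **Prior information from a symmetric-supported density matrix.**
If `ρ` is a two-qubit density matrix supported inside `span{|00⟩, |11⟩, (|01⟩+|10⟩)/√2}`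
and `H` is Hermitian with `supp H ⊆ supp ρ`, then `Tr(Z₁H) = Tr(Z₂H)`,
`Tr(X₁Y₂H) = Tr(Y₁X₂H)`, and `Tr(H) = Tr(X₁X₂H) + Tr(Y₁Y₂H) + Tr(Z₁Z₂H)`. -/
theorem symmetric_support_trace_constraints
    (ρ H : Matrix (Fin 2 × Fin 2) (Fin 2 × Fin 2) ℂ)
    (hρ : ρ.PosSemidef) (hρtr : ρ.trace = 1)
    (hsupp : LinearMap.range (Matrix.toLin' ρ) ≤
      Submodule.span ℂ {e00, e11, ePlus})
    (hH : H.IsHermitian)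
    (hker : LinearMap.ker (Matrix.toLin' ρ) ≤ LinearMap.ker (Matrix.toLin' H))
    (hrange : LinearMap.range (Matrix.toLin' H) ≤ LinearMap.range (Matrix.toLin' ρ)) :
    ((pauliZ ⊗ₖ (1 : Matrix (Fin 2) (Fin 2) ℂ)) * H).trace =
      (((1 : Matrix (Fin 2) (Fin 2) ℂ) ⊗ₖ pauliZ) * H).trace ∧
    ((pauliX ⊗ₖ pauliY) * H).trace = ((pauliY ⊗ₖ pauliX) * H).trace ∧
    H.trace = ((pauliX ⊗ₖ pauliX) * H).trace + ((pauliY ⊗ₖ pauliY) * H).trace +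
      ((pauliZ ⊗ₖ pauliZ) * H).trace :=
  symmetric_support_trace_constraints_general ρ H hρ hsupp hH hker
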